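/- Let M be a positive integer congruent to 2 modulo 4, and let the cyclic group Z/M act on the abelian group Z/2 × Z/2 by letting the generator g act by swapping the two coordinates. Then the second group cohomology H^2(Z/M; Z/2 × Z/2) is trivial. -/

import Mathlib

/-!
For a finite cyclic group `G = ⟨g⟩`, even-degree cohomology is `ker (g - 1) / im N` with
`N = ∑ h, h`. Here `g` acts by the swap `σ`, an involution, and `M = 2m` with `m` odd, so
`N = m (1 + σ) = 1 + σ` on the `2`-torsion group `ℤ/2 × ℤ/2`; and `1 + σ` maps `(a, 0)` onto
every swap-invariant vector `(a, a)`.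
-/

universe u

open Finset CategoryTheory

theorem Finset.sum_univ_eq_sum_range_orderOf {G β : Type*} [Group G] [Fintype G]
    [AddCommMonoid β] {g : G} (hg : ∀ x, x ∈ Subgroup.zpowers g) (f : G → β) :
    ∑ x, f x = ∑ i ∈ range (orderOf g), f (g ^ i) := by
  classical
  rw [← IsCyclic.image_range_orderOf hg, sum_image (by simpa using pow_injOn_Iio_orderOf)]

theorem Representation.norm_eq_sum_range_orderOf {k G V : Type*} [Semiring k] [Group G]
    [Fintype G] [AddCommMonoid V] [Module k V] (ρ : Representation k G V) {g : G}
    (hg : ∀ x, x ∈ Subgroup.zpowers g) :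
    ρ.norm = ∑ i ∈ range (orderOf g), ρ g ^ i := by
  simp only [Representation.norm, Finset.sum_univ_eq_sum_range_orderOf hg, map_pow]

theorem Finset.sum_range_two_mul_pow_of_sq_eq_one {R : Type*} [Semiring R] {σ : R}
    (hσ : σ ^ 2 = 1) (m : ℕ) : ∑ i ∈ range (2 * m), σ ^ i = m • (1 + σ) := by
  induction m with
  | zero => simp
  | succ m ih =>
    rw [show 2 * (m + 1) = 2 * m + 1 + 1 by ring, sum_range_succ, sum_range_succ, ih,
      pow_succ, pow_mul, hσ, one_pow, one_mul, succ_nsmul, add_assoc]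

theorem Rep.FiniteCyclicGroup.subsingleton_groupCohomology_of_ker_le_range {k G : Type u}
    [CommRing k] [CommGroup G] [Fintype G] (A : Rep k G) {g : G}
    (hg : ∀ x, x ∈ Subgroup.zpowers g) {i : ℕ} [NeZero i] (hi : Even i)
    (h : LinearMap.ker (applyAsHom A g - 𝟙 A).hom.toLinearMap ≤
      LinearMap.range A.norm.hom.toLinearMap) :
    Subsingleton (groupCohomology A i) := by
  have hexact : (normHomCompSub A g).Exact :=
    (ShortComplex.moduleCat_exact_iff_ker_sub_range _).2 h
  exact ModuleCat.isZero_iff_subsingleton.1 <|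
    ((normHomCompSub A g).exact_iff_isZero_homology.1 hexact).of_iso
      (groupCohomologyIsoEven A g hg i hi)

theorem Multiplicative.mem_zpowers_ofAdd_one (M : ℕ) (x : Multiplicative (ZMod M)) :
    x ∈ Subgroup.zpowers (ofAdd 1) :=
  ⟨(toAdd x).cast, by dsimp only; rw [← ofAdd_zsmul, zsmul_one, ZMod.intCast_zmod_cast]; rfl⟩

theorem Prod.exists_add_swap_eq_of_swap_eq {α : Type*} [AddZeroClass α] {a : α × α}
    (ha : a.swap = a) : ∃ b : α × α, b + b.swap = a :=
  ⟨(a.1, 0), Prod.ext (add_zero _) (by simpa using (congrArg Prod.fst ha).symm)⟩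

theorem ZMod.odd_nsmul_eq_self {V : Type*} [AddCommGroup V] [Module (ZMod 2) V] {n : ℕ}
    (hn : Odd n) (v : V) : n • v = v := by
  rw [← Nat.cast_smul_eq_nsmul (ZMod 2), ZMod.natCast_eq_one_iff_odd.2 hn, one_smul]

/-- Let `M` be a positive integer congruent to `2` modulo `4`, and let the
cyclic group `ℤ/M` (written multiplicatively as `Multiplicative (ZMod M)`) act on the abelian
group `ℤ/2 × ℤ/2` by letting the generator act by swapping the two coordinates.  Then the
second group cohomology `H²(ℤ/M; ℤ/2 × ℤ/2)` is trivial. -/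
theorem h2_swap_action_zmod_two_sq_of_two_mod_four (M : ℕ) (hM : M % 4 = 2)
    (ρ : Representation ℤ (Multiplicative (ZMod M)) (ZMod 2 × ZMod 2))
    (hρ : ρ (Multiplicative.ofAdd (1 : ZMod M)) =
      (LinearEquiv.prodComm ℤ (ZMod 2) (ZMod 2)).toLinearMap) :
    Subsingleton (groupCohomology.H2 (Rep.of ρ)) := by
  have : NeZero M := ⟨by omega⟩
  set g := Multiplicative.ofAdd (1 : ZMod M)
  have hg := Multiplicative.mem_zpowers_ofAdd_one M
  have horder : orderOf g = 2 * (M / 2) := by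
    rw [orderOf_ofAdd_eq_addOrderOf, ZMod.addOrderOf_one]; omega
  have hsq : ρ g ^ 2 = 1 := by
    rw [hρ]; ext a <;> rfl
  have hnorm : ρ.norm = (M / 2) • (1 + ρ g) := by
    rw [ρ.norm_eq_sum_range_orderOf hg, horder, sum_range_two_mul_pow_of_sq_eq_one hsq]
  refine Rep.FiniteCyclicGroup.subsingleton_groupCohomology_of_ker_le_range _ hg even_two ?_
  intro a ha
  have hfix : ρ g a = a := sub_eq_zero.1 ha
  rw [hρ] at hfix
  obtain ⟨b, hb⟩ := Prod.exists_add_swap_eq_of_swap_eq hfix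
  refine ⟨b, ?_⟩
  change ρ.norm b = a
  rw [hnorm, LinearMap.smul_apply, LinearMap.add_apply, Module.End.one_apply, hρ]
  change (M / 2) • (b + b.swap) = a
  rw [hb, ZMod.odd_nsmul_eq_self (Nat.odd_iff.2 (by omega))]
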